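/- arXiv:1709.02485 — 3 statements merged into one kernel-verified Lean document; each statement's English description precedes it below -/
import Mathlib

section
/- Let k ⊆ l be number fields, let ω₁, …, ω_e be a k-basis of l contained in O_l, and let 𝔐 ⊆ O_l be the full O_k-module they generate. Let E_{l/k}(𝔐) = {α ∈ O_𝔐^× : Norm_{l/k}(α) ∈ Tor(O_k^×)} be the group of relative units, where O_𝔐 = {α ∈ l : α𝔐 ⊆ 𝔐} and O_𝔐^× = O_𝔐 ∩ O_l^×. Assume that the rank of E_{l/k}(𝔐) is zero. If β ≠ 0 is a point in O_k and μ ≠ 0 is a point in 𝔐 such that Norm_{l/k}(μ) = ζβ for some root of unity ζ ∈ Tor(O_k^×), then h(μ) = [l : k]^{-1}·h(β). -/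
open NumberField Module

/-- The normalized logarithmic absolute value `log |x|_w` at an infinite place `w`
of a number field `F`, where `|·|_w = ‖·‖_w^{d_w/d}`. -/
noncomputable def infLogAbs (F : Type*) [Field F] [NumberField F]
    (w : InfinitePlace F) (x : F) : ℝ :=
  (w.mult : ℝ) / (finrank ℚ F : ℝ) * Real.log (w x)

/-- The normalized logarithmic absolute value `log |x|_v` at a finite place `v`
of a number field `F`. -/
noncomputable def finLogAbs (F : Type*) [Field F] [NumberField F]
    (v : IsDedekindDomain.HeightOneSpectrum (𝓞 F)) (x : F) : ℝ :=
  if h : (v.valuation (K := F)) x = 0 then 0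
  else ((Multiplicative.toAdd (WithZero.unzero h) : ℤ) : ℝ) / (finrank ℚ F : ℝ) *
    Real.log (Ideal.absNorm v.asIdeal)

/-- The absolute logarithmic Weil height `h(x) = ∑_w log⁺ |x|_w`, the sum running over
all (infinite and finite) places of the number field `F`. -/
noncomputable def weilHeight (F : Type*) [Field F] [NumberField F] (x : F) : ℝ :=
  (∑ w : InfinitePlace F, max 0 (infLogAbs F w x)) +
    ∑ᶠ v : IsDedekindDomain.HeightOneSpectrum (𝓞 F), max 0 (finLogAbs F v x)

/-- The full `O_k`-module `𝔐` generated by elements `ω i` of `l`. -/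
def fullModule (K : Type*) [Field K] [NumberField K] {L : Type*} [Field L]
    [Algebra K L] {e : ℕ} (ω : Fin e → L) : Set L :=
  {x | ∃ ν : Fin e → 𝓞 K, x = ∑ i, algebraMap K L (ν i : K) * ω i}

/-- The coefficient ring `O_𝔐 = {α ∈ l : α𝔐 ⊆ 𝔐}` of a full module `𝔐 ⊆ l`. -/
def coeffRing {L : Type*} [Field L] (M : Set L) : Set L :=
  {α | ∀ x ∈ M, α * x ∈ M}

/-- The unit group `O_𝔐^× = O_𝔐 ∩ O_l^×` of the coefficient ring. -/
def coeffRingUnits {L : Type*} [Field L] [NumberField L] (M : Set L) : Set L :=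
  {α | α ∈ coeffRing M ∧ ∃ u : (𝓞 L)ˣ, ((u : 𝓞 L) : L) = α}

/-- The group `E_{l/k}(𝔐) = {α ∈ O_𝔐^× : Norm_{l/k}(α) ∈ Tor(O_k^×)}` of relative units. -/
def relUnits (K : Type*) [Field K] [NumberField K] (L : Type*) [Field L] [NumberField L]
    [Algebra K L] (M : Set L) : Set L :=
  {α | α ∈ coeffRingUnits M ∧ ∃ n : ℕ, 0 < n ∧ (Algebra.norm K α) ^ n = 1}

/-- A family of elements of `Lˣ` is multiplicatively independent if no nontrivial
integer-power product of them equals `1`. -/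
def MulIndep {L : Type*} [Field L] {r : ℕ} (ε : Fin r → L) : Prop :=
  ∀ m : Fin r → ℤ, (∏ j, ε j ^ m j) = 1 → m = 0

open scoped Classical in
/-- The set of infinite places of `L` lying above an infinite place `v` of `K`. -/
noncomputable def placesAbove (K : Type*) [Field K] (L : Type*) [Field L] [NumberField L]
    [Algebra K L] (v : InfinitePlace K) : Finset (InfinitePlace L) :=
  Finset.univ.filter (fun w => w.comap (algebraMap K L) = v)

/-! If an infinite place of `k` had two places of `l` above it, the unit rank of `l` would exceed
that of `k`, so some unit `ε` of `O_l` of infinite order would have a norm of finite order.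
Since `𝔐 ⊇ d O_l` for some `d ≠ 0` in `O_k` and `O_l / d O_l` is finite, some power `ε^m` is
`≡ 1 mod d`, hence lies in `O_𝔐`, and would be a relative unit of infinite order.
So every infinite place `v` of `k` has exactly one place `w` above it, and then
`|Norm α|_v = |α|_w^[l:k]` and `d_w = [l:k] d_v`. As `μ` and `β` are integral, only infinite places
contribute to their heights, and these can be compared place by place. -/

lemma Module.Basis.exists_smul_mem_span_of_fg {R K V ι : Type*} [CommRing R] [Field K]
    [Algebra R K] [IsFractionRing R K] [AddCommGroup V] [Module K V] [Module R V]
    [IsScalarTower R K V] [Fintype ι] (b : Basis ι K V) {P : Submodule R V} (hP : P.FG) :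
    ∃ d ∈ nonZeroDivisors R, ∀ z ∈ P, d • z ∈ Submodule.span R (Set.range b) := by
  classical
  obtain ⟨s, rfl⟩ := hP
  obtain ⟨d, hd⟩ := IsLocalization.exist_integer_multiples (nonZeroDivisors R)
    (s ×ˢ Finset.univ) fun p : V × ι => b.repr p.1 p.2
  refine ⟨d, d.2, fun z hz => ?_⟩
  suffices hs : (s : Set V) ⊆ (Submodule.span R (Set.range b)).comap (LinearMap.lsmul R V d) from
    Submodule.span_le.mpr hs hz
  intro z hz
  have hcoord : ∀ i, ∃ c : R, algebraMap R K c = (d : R) • b.repr z i := fun i =>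
    hd (z, i) (Finset.mem_product.mpr ⟨hz, Finset.mem_univ i⟩)
  choose c hc using hcoord
  refine (Submodule.mem_span_range_iff_exists_fun R).mpr ⟨c, ?_⟩
  conv_rhs => rw [LinearMap.lsmul_apply, ← b.sum_repr z, Finset.smul_sum]
  refine Finset.sum_congr rfl fun i _ => ?_
  rw [← algebraMap_smul K, hc, smul_assoc]

lemma Ideal.exists_pow_sub_one_mem {S : Type*} [CommRing S] (I : Ideal S) [Finite (S ⧸ I)]
    (ε : Sˣ) : ∃ m : ℕ, 0 < m ∧ (ε : S) ^ m - 1 ∈ I := by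
  let ε' := Units.map (Ideal.Quotient.mk I : S →* S ⧸ I) ε
  refine ⟨orderOf ε', orderOf_pos ε', Ideal.Quotient.eq.mp ?_⟩
  rw [map_pow, map_one]
  exact Units.ext_iff.mp (pow_orderOf_eq_one ε')

section FullModule

variable {K L : Type*} [Field K] [NumberField K] [Field L] [Algebra K L]

lemma fullModule_eq_span {e : ℕ} (ω : Fin e → L) :
    fullModule K ω = Submodule.span (𝓞 K) (Set.range ω) := by
  ext x
  rw [SetLike.mem_coe, Submodule.mem_span_range_iff_exists_fun]
  refine exists_congr fun ν => ?_
  have hsmul : ∀ i, (ν i : 𝓞 K) • ω i = algebraMap K L (ν i : K) * ω i := fun i => by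
    rw [← Algebra.smul_def, algebraMap_smul]
  simp only [hsmul, eq_comm]

lemma isIntegral_of_mem_fullModule {e : ℕ} {ω : Fin e → L} (hω : ∀ i, IsIntegral ℤ (ω i))
    {x : L} (hx : x ∈ fullModule K ω) : IsIntegral ℤ x := by
  obtain ⟨ν, rfl⟩ := hx
  exact IsIntegral.sum _ fun i _ => ((ν i).2.algebraMap).mul (hω i)

lemma exists_pow_mem_coeffRing_fullModule [NumberField L] {e : ℕ} (b : Basis (Fin e) K L)
    (hb : ∀ i, IsIntegral ℤ (b i)) (ε : (𝓞 L)ˣ) :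
    ∃ m : ℕ, 0 < m ∧ ((ε : 𝓞 L) : L) ^ m ∈ coeffRing (fullModule K fun i => b i) := by
  have hfg : (LinearMap.range ((Algebra.linearMap (𝓞 L) L).restrictScalars (𝓞 K))).FG := by
    rw [LinearMap.range_eq_map]
    exact Module.Finite.fg_top.map _
  obtain ⟨d, hd0, hd⟩ := b.exists_smul_mem_span_of_fg hfg
  have hd'0 : algebraMap (𝓞 K) (𝓞 L) d ≠ 0 :=
    (map_ne_zero_iff _ (FaithfulSMul.algebraMap_injective _ _)).mpr (nonZeroDivisors.ne_zero hd0)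
  have : Finite (𝓞 L ⧸ Ideal.span {algebraMap (𝓞 K) (𝓞 L) d}) :=
    Ideal.finiteQuotientOfFreeOfNeBot _ (by simpa using hd'0)
  obtain ⟨m, hm, hmem⟩ := (Ideal.span {algebraMap (𝓞 K) (𝓞 L) d}).exists_pow_sub_one_mem ε
  obtain ⟨z, hz⟩ := Ideal.mem_span_singleton'.mp hmem
  refine ⟨m, hm, fun x hx => ?_⟩
  let x' : 𝓞 L := ⟨x, isIntegral_of_mem_fullModule hb hx⟩
  have hεm : ((ε : 𝓞 L) : L) ^ m * x = x + d • ((z * x' : 𝓞 L) : L) := by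
    have hzL := congrArg (fun y : 𝓞 L => (y : L) * x) hz
    push_cast at hzL
    have hzx : ((z * x' : 𝓞 L) : L) = z * x := rfl
    rw [Algebra.smul_def, IsScalarTower.algebraMap_apply (𝓞 K) (𝓞 L) L, hzx]
    linear_combination -hzL
  rw [fullModule_eq_span] at hx ⊢
  rw [hεm]
  exact add_mem hx (hd _ ⟨z * x', rfl⟩)

end FullModule

lemma card_infinitePlace_le_of_isOfFinOrder_norm (K L : Type*) [Field K] [NumberField K]
    [Field L] [NumberField L] [Algebra K L]
    (h : ∀ ε : (𝓞 L)ˣ, IsOfFinOrder (Units.map (RingOfIntegers.norm K : 𝓞 L →* 𝓞 K) ε) →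
      IsOfFinOrder ε) :
    Fintype.card (InfinitePlace L) ≤ Fintype.card (InfinitePlace K) := by
  -- instance search misses `Units.instCommGroupUnits` under `Additive (_ ⧸ _)` here
  let : CommGroup (𝓞 L)ˣ := inferInstance
  let : CommGroup (𝓞 K)ˣ := inferInstance
  let q := QuotientGroup.map (Units.torsion L) (Units.torsion K)
    (Units.map (RingOfIntegers.norm K : 𝓞 L →* 𝓞 K)) fun _ hε => MonoidHom.isOfFinOrder _ hε
  have hq : Function.Injective q := by
    refine (injective_iff_map_eq_one q).mpr fun x hx => ?_
    induction x using QuotientGroup.induction_on with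
    | H ε =>
      exact (QuotientGroup.eq_one_iff ε).mpr (h ε ((QuotientGroup.eq_one_iff _).mp hx))
  let f : Additive ((𝓞 L)ˣ ⧸ Units.torsion L) →ₗ[ℤ] Additive ((𝓞 K)ˣ ⧸ Units.torsion K) :=
    AddMonoidHom.toIntLinearMap (MonoidHom.toAdditive q)
  have hrank := LinearMap.finrank_le_finrank_of_injective (f := f) hq
  rw [Units.finrank_modTorsion, Units.finrank_modTorsion, Units.rank, Units.rank] at hrank
  have := Fintype.card_pos (α := InfinitePlace K)
  omega

section RelativeUnits

variable {K L : Type*} [Field K] [NumberField K] [Field L] [NumberField L] [Algebra K L]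
  {e : ℕ} (b : Basis (Fin e) K L) (hb : ∀ i, IsIntegral ℤ (b i))
  (hrank : ∀ α ∈ relUnits K L (fullModule K fun i => b i), ∃ n : ℕ, 0 < n ∧ α ^ n = 1)
include hb hrank

lemma isOfFinOrder_of_isOfFinOrder_norm (ε : (𝓞 L)ˣ)
    (hε : IsOfFinOrder (Units.map (RingOfIntegers.norm K : 𝓞 L →* 𝓞 K) ε)) :
    IsOfFinOrder ε := by
  have hinjK : Function.Injective (algebraMap (𝓞 K) K : 𝓞 K →* K) :=
    FaithfulSMul.algebraMap_injective _ _
  have hinjL : Function.Injective (algebraMap (𝓞 L) L : 𝓞 L →* L) :=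
    FaithfulSMul.algebraMap_injective _ _
  obtain ⟨m, hm, hmem⟩ := exists_pow_mem_coeffRing_fullModule b hb ε
  have hnorm : IsOfFinOrder (Algebra.norm K (((ε : 𝓞 L) : L) ^ m)) := by
    rw [map_pow]
    refine IsOfFinOrder.pow ?_
    simpa using hinjK.isOfFinOrder_iff.mpr (Units.isOfFinOrder_val.mpr hε)
  obtain ⟨p, hp, hp1⟩ := hrank _ ⟨⟨hmem, ε ^ m, by simp⟩, isOfFinOrder_iff_pow_eq_one.mp hnorm⟩
  rw [← Units.isOfFinOrder_val, ← hinjL.isOfFinOrder_iff, isOfFinOrder_iff_pow_eq_one]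
  exact ⟨m * p, by positivity, by rw [pow_mul]; exact hp1⟩

lemma comap_injective_of_relUnits_torsion :
    Function.Injective fun w : InfinitePlace L => w.comap (algebraMap K L) := by
  have hcard := card_infinitePlace_le_of_isOfFinOrder_norm K L
    (isOfFinOrder_of_isOfFinOrder_norm b hb hrank)
  exact ((Fintype.bijective_iff_surjective_and_card _).mpr
    ⟨InfinitePlace.comap_surjective, le_antisymm hcard (InfinitePlace.card_mono K L)⟩).1

end RelativeUnits

section Places

open InfinitePlace

variable {K L : Type*} [Field K] [Field L] [Algebra K L]

lemma card_ringHom_comp_algebraMap_eq [FiniteDimensional K L] [Algebra.IsSeparable K L]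
    (ψ : K →+* ℂ) :
    Nat.card {φ : L →+* ℂ // φ.comp (algebraMap K L) = ψ} = finrank K L := by
  let _ := ψ.toAlgebra
  rw [← AlgHom.card K L ℂ, ← Nat.card_eq_fintype_card]
  exact Nat.card_congr
    { toFun φ := { toRingHom := φ.1, commutes' := RingHom.congr_fun φ.2 }
      invFun σ := ⟨σ.toRingHom, RingHom.ext σ.commutes⟩ }

variable (hinj : Function.Injective fun w : InfinitePlace L => w.comap (algebraMap K L))
include hinj

lemma mk_eq_iff_mk_comp_eq_comap (w : InfinitePlace L) (φ : L →+* ℂ) :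
    mk φ = w ↔ mk (φ.comp (algebraMap K L)) = w.comap (algebraMap K L) :=
  ⟨fun h => h ▸ comap_mk φ _, fun h => hinj (by simpa only [comap_mk] using h)⟩

lemma mult_eq_mult_comap_mul_finrank [NumberField K] [NumberField L] (w : InfinitePlace L) :
    mult w = mult (w.comap (algebraMap K L)) * finrank K L := by
  classical
  set v := w.comap (algebraMap K L)
  rw [← card_filter_mk_eq w, ← card_filter_mk_eq v]
  simp_rw [mk_eq_iff_mk_comp_eq_comap hinj w]
  rw [Finset.card_eq_sum_card_fiberwise (f := fun φ : L →+* ℂ => φ.comp (algebraMap K L))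
    (t := {ψ : K →+* ℂ | mk ψ = v}) (fun φ hφ => by simpa using hφ), Finset.sum_const_nat]
  intro ψ hψ
  rw [Finset.mem_filter] at hψ
  rw [← card_ringHom_comp_algebraMap_eq ψ, Nat.card_eq_fintype_card, Fintype.card_subtype]
  congr 1
  ext φ
  simp +contextual [hψ.2, v]

lemma comap_apply_norm [NumberField K] [NumberField L] (w : InfinitePlace L) (x : L) :
    w.comap (algebraMap K L) (Algebra.norm K x) = w x ^ finrank K L := by
  set v := w.comap (algebraMap K L)
  let _ := v.embedding.toAlgebra
  have hσ (σ : L →ₐ[K] ℂ) : ‖σ x‖ = w x := by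
    have hcomp : (σ : L →+* ℂ).comp (algebraMap K L) = v.embedding := RingHom.ext σ.commutes
    rw [← (mk_eq_iff_mk_comp_eq_comap hinj w σ).mpr (by rw [hcomp, mk_embedding]), apply]
    rfl
  rw [← norm_embedding_eq, ← RingHom.algebraMap_toAlgebra v.embedding,
    Algebra.norm_eq_prod_embeddings K ℂ x, norm_prod, Finset.prod_congr rfl fun σ _ => hσ σ,
    Finset.prod_const, Finset.card_univ, AlgHom.card]

end Places

section Height

lemma finLogAbs_nonpos_of_isIntegral {F : Type*} [Field F] [NumberField F] {x : F}
    (hx : IsIntegral ℤ x) (v : IsDedekindDomain.HeightOneSpectrum (𝓞 F)) :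
    finLogAbs F v x ≤ 0 := by
  unfold finLogAbs
  split_ifs with h
  · rfl
  have hval : WithZero.unzero h ≤ 1 := by
    rw [← WithZero.coe_le_coe, WithZero.coe_unzero, WithZero.coe_one]
    exact v.valuation_le_one (⟨x, hx⟩ : 𝓞 F)
  refine mul_nonpos_of_nonpos_of_nonneg (div_nonpos_of_nonpos_of_nonneg ?_ (Nat.cast_nonneg _))
    (Real.log_natCast_nonneg _)
  exact_mod_cast hval

lemma weilHeight_eq_sum_of_isIntegral {F : Type*} [Field F] [NumberField F] {x : F}
    (hx : IsIntegral ℤ x) : weilHeight F x = ∑ w : InfinitePlace F, max 0 (infLogAbs F w x) := by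
  rw [weilHeight, finsum_congr fun v => max_eq_left (finLogAbs_nonpos_of_isIntegral hx v),
    finsum_zero, add_zero]

lemma weilHeight_mul_of_pow_eq_one {F : Type*} [Field F] [NumberField F] {ζ x : F}
    (hx : IsIntegral ℤ x) {n : ℕ} (hn : 0 < n) (hζ : ζ ^ n = 1) :
    weilHeight F (ζ * x) = weilHeight F x := by
  have hζInt : IsIntegral ℤ ζ := (IsPrimitiveRoot.orderOf ζ).isIntegral
    (orderOf_pos_iff.mpr (isOfFinOrder_iff_pow_eq_one.mpr ⟨n, hn, hζ⟩))
  rw [weilHeight_eq_sum_of_isIntegral (hζInt.mul hx), weilHeight_eq_sum_of_isIntegral hx]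
  refine Finset.sum_congr rfl fun w _ => ?_
  have hwζ : w ζ = 1 := by
    rw [← InfinitePlace.norm_embedding_eq]
    exact Complex.norm_eq_one_of_pow_eq_one (by rw [← map_pow, hζ, map_one]) hn.ne'
  rw [infLogAbs, infLogAbs, map_mul, hwζ, one_mul]

variable {K L : Type*} [Field K] [NumberField K] [Field L] [NumberField L] [Algebra K L]
  (hinj : Function.Injective fun w : InfinitePlace L => w.comap (algebraMap K L))
include hinj

lemma infLogAbs_norm (w : InfinitePlace L) (x : L) :
    infLogAbs K (w.comap (algebraMap K L)) (Algebra.norm K x) =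
      finrank K L * infLogAbs L w x := by
  have hK : (finrank ℚ K : ℝ) ≠ 0 := by exact_mod_cast finrank_pos.ne'
  have hKL : (finrank K L : ℝ) ≠ 0 := by exact_mod_cast finrank_pos.ne'
  rw [infLogAbs, infLogAbs, comap_apply_norm hinj, Real.log_pow,
    mult_eq_mult_comap_mul_finrank hinj, ← finrank_mul_finrank ℚ K L]
  push_cast
  field_simp

lemma weilHeight_norm {x : L} (hx : IsIntegral ℤ x) :
    weilHeight K (Algebra.norm K x) = finrank K L * weilHeight L x := by
  have hNx : IsIntegral ℤ (Algebra.norm K x) :=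
    (RingOfIntegers.norm K (⟨x, hx⟩ : 𝓞 L)).isIntegral_coe
  rw [weilHeight_eq_sum_of_isIntegral hNx, weilHeight_eq_sum_of_isIntegral hx, Finset.mul_sum]
  refine (Fintype.sum_bijective _ ⟨hinj, InfinitePlace.comap_surjective⟩ _ _ fun w => ?_).symm
  rw [infLogAbs_norm hinj, mul_max_of_nonneg _ _ (Nat.cast_nonneg _), mul_zero]

end Height

theorem height_of_solutions_of_norm_form_rank_zero_general
    (K L : Type*) [Field K] [NumberField K] [Field L] [NumberField L] [Algebra K L]
    (e : ℕ) (b : Basis (Fin e) K L)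
    (hbInt : ∀ i, IsIntegral ℤ (b i))
    (M : Set L) (hM : M = fullModule K (fun i => b i))
    -- the group `E_{l/k}(𝔐)` of relative units has rank zero, i.e. it is a torsion group:
    (hrank : ∀ α ∈ relUnits K L M, ∃ n : ℕ, 0 < n ∧ α ^ n = 1)
    (β : K) (hβInt : IsIntegral ℤ β)
    (μ : L) (hμM : μ ∈ M)
    (ζ : K) (hζ : ∃ n : ℕ, 0 < n ∧ ζ ^ n = 1)
    (hNorm : Algebra.norm K μ = ζ * β) :
    weilHeight L μ = (finrank K L : ℝ)⁻¹ * weilHeight K β := by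
  subst hM
  have hinj := comap_injective_of_relUnits_torsion b hbInt hrank
  obtain ⟨n, hn, hζn⟩ := hζ
  have hd : (finrank K L : ℝ) ≠ 0 := by exact_mod_cast finrank_pos.ne'
  rw [← weilHeight_mul_of_pow_eq_one hβInt hn hζn, ← hNorm,
    weilHeight_norm hinj (isIntegral_of_mem_fullModule hbInt hμM), inv_mul_cancel_left₀ hd]

/-- **Theorem 1.2.** Let `𝔐 ⊆ O_l` be the full `O_k`-module generated by a `k`-basis of `l`
consisting of algebraic integers, and assume the rank of the group `E_{l/k}(𝔐)` of relative
units is zero (i.e. every relative unit is a root of unity).  If `β ≠ 0` in `O_k` and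
`μ ≠ 0` in `𝔐` satisfy `Norm_{l/k}(μ) = ζβ` with `ζ ∈ Tor(O_k^×)`, then
`h(μ) = [l:k]⁻¹ h(β)`. -/
theorem height_of_solutions_of_norm_form_rank_zero
    (K L : Type*) [Field K] [NumberField K] [Field L] [NumberField L] [Algebra K L]
    (e : ℕ) (he : e = finrank K L) (b : Basis (Fin e) K L)
    (hbInt : ∀ i, IsIntegral ℤ (b i))
    (M : Set L) (hM : M = fullModule K (fun i => b i))
    -- the group `E_{l/k}(𝔐)` of relative units has rank zero, i.e. it is a torsion group:
    (hrank : ∀ α ∈ relUnits K L M, ∃ n : ℕ, 0 < n ∧ α ^ n = 1)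
    (β : K) (hβInt : IsIntegral ℤ β) (hβ : β ≠ 0)
    (μ : L) (hμM : μ ∈ M) (hμ : μ ≠ 0)
    (ζ : K) (hζ : ∃ n : ℕ, 0 < n ∧ ζ ^ n = 1)
    (hNorm : Algebra.norm K μ = ζ * β) :
    weilHeight L μ = (finrank K L : ℝ)⁻¹ * weilHeight K β :=
  height_of_solutions_of_norm_form_rank_zero_general K L e b hbInt M hM hrank β hβInt μ hμM ζ hζ
    hNorm
end

section
/- Let k ⊆ l be number fields, 𝔐 ⊆ O_l a full O_k-module generated by a k-basis of l, and E_{l/k}(𝔐) its group of relative units, of rank r(l/k) = r(l) − r(k). Let ε₁, …, ε_{r(l/k)} be multiplicatively independent elements of E_{l/k}(𝔐), and let 𝔈 be the subgroup they generate. If μ ∈ l^×, then there exists γ ∈ 𝔈 such that ∑_{v|∞} ∑_{w|v} | log|γμ|_w − |W_v(l/k)|^{-1} ∑_{x|v} log|γμ|_x | ≤ ∑_{j=1}^{r(l/k)} h(ε_j), where the outer sum runs over the archimedean places v of k, the sums over w and x run over the places of l above v, and |W_v(l/k)| is the number of places of l above v. -/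
open NumberField Module

/-!
Write `ℓ(x) = (log |x|_w)_w` for the vector of archimedean logarithms of `x ∈ l^×`. Since
`Norm_{l/k}(ε_j)` is a root of unity, the product formula over the places above each `v | ∞`
puts every `ℓ(ε_j)` in the kernel `D` of the fibrewise sum `ℝ^{places of l} → ℝ^{places of k}`,
a space of dimension `r(l) − r(k)`. The `ℓ(ε_j)` are `ℤ`-independent inside the discrete unit
lattice, hence `ℝ`-independent, hence a basis of `D`. The left-hand side of the claim is the
`ℓ¹`-norm of `P ℓ(γμ) = P ℓ(μ) + ∑ m_j ℓ(ε_j)`, where `P` subtracts from each coordinate the mean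
over its fibre (a projection onto `D`). Writing `P ℓ(μ) = ∑ c_j ℓ(ε_j)` and taking
`m_j = −round c_j` bounds it by `½ ∑_j ‖ℓ(ε_j)‖₁`, and `‖ℓ(ε)‖₁ = 2 h(ε)` for a unit `ε`, whose
logarithms sum to zero and which has no finite contribution to its height.
-/

open Finset NumberField.InfinitePlace NumberField.Units NumberField.Units.dirichletUnitTheorem
  IsDedekindDomain

namespace NumberField.InfinitePlace

variable {K L : Type*} [Field K] [Field L] [Algebra K L]

theorem mem_placesAbove [NumberField L] {v : InfinitePlace K} {w : InfinitePlace L} :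
    w ∈ placesAbove K L v ↔ w.comap (algebraMap K L) = v := by
  simp [placesAbove]

theorem placesAbove_nonempty [NumberField K] [NumberField L] (v : InfinitePlace K) :
    (placesAbove K L v).Nonempty :=
  let ⟨w, hw⟩ := comap_surjective (K := L) v
  ⟨w, mem_placesAbove.2 hw⟩

theorem sum_sum_placesAbove [NumberField K] [NumberField L] {M : Type*} [AddCommMonoid M]
    (f : InfinitePlace L → M) : ∑ v, ∑ w ∈ placesAbove K L v, f w = ∑ w, f w := by
  classical
  convert sum_fiberwise univ (fun w : InfinitePlace L => w.comap (algebraMap K L)) f with v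
  ext w
  simp [mem_placesAbove]

open scoped Classical in
theorem prod_norm_filter_mk_eq {F : Type*} [Field F] [NumberField F] (w : InfinitePlace F)
    (x : F) : ∏ ψ : F →+* ℂ with mk ψ = w, ‖ψ x‖ = w x ^ w.mult := by
  rw [prod_congr rfl fun ψ hψ => (mem_filter.1 hψ).2 ▸ (apply ψ x).symm, prod_const,
    card_filter_mk_eq]

open scoped Classical in
theorem prod_norm_apply_of_comp_eq [NumberField K] [NumberField L] (φ : K →+* ℂ) (x : L) :
    ∏ ψ : L →+* ℂ with ψ.comp (algebraMap K L) = φ, ‖ψ x‖ = ‖φ (Algebra.norm K x)‖ := by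
  let := φ.toAlgebra
  rw [← RingHom.algebraMap_toAlgebra φ, Algebra.norm_eq_prod_embeddings K ℂ x, norm_prod]
  refine Eq.trans ?_ (prod_map univ ⟨_, AlgHom.coe_ringHom_injective⟩ fun ψ => ‖ψ x‖)
  congr 1
  ext ψ
  simp only [mem_filter, mem_univ, true_and, mem_map, Function.Embedding.coeFn_mk]
  refine ⟨fun h => ⟨{ ψ with commutes' := fun r => congr($h r) }, rfl⟩, ?_⟩
  rintro ⟨σ, rfl⟩
  exact σ.comp_algebraMap

open scoped Classical in
theorem prod_placesAbove_pow_mult [NumberField K] [NumberField L] (v : InfinitePlace K) (x : L) :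
    ∏ w ∈ placesAbove K L v, w x ^ w.mult = v (Algebra.norm K x) ^ v.mult := by
  calc ∏ w ∈ placesAbove K L v, w x ^ w.mult
      = ∏ ψ : L →+* ℂ with mk ψ ∈ placesAbove K L v, ‖ψ x‖ := by
        rw [← prod_fiberwise_eq_prod_filter]
        exact prod_congr rfl fun w _ => (prod_norm_filter_mk_eq w x).symm
    _ = ∏ ψ : L →+* ℂ with ψ.comp (algebraMap K L) ∈ ({φ | mk φ = v} : Finset (K →+* ℂ)),
          ‖ψ x‖ := by
        refine prod_congr (filter_congr fun ψ _ => ?_) fun _ _ => rfl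
        simp [mem_placesAbove, comap_mk]
    _ = ∏ φ : K →+* ℂ with mk φ = v, ‖φ (Algebra.norm K x)‖ := by
        rw [← prod_fiberwise_eq_prod_filter]
        exact prod_congr rfl fun φ _ => prod_norm_apply_of_comp_eq φ x
    _ = v (Algebra.norm K x) ^ v.mult := prod_norm_filter_mk_eq v _

end NumberField.InfinitePlace

theorem IsDedekindDomain.HeightOneSpectrum.valuation_units_eq_one {R K : Type*} [CommRing R]
    [IsDedekindDomain R] [Field K] [Algebra R K] [IsFractionRing R K] (v : HeightOneSpectrum R)
    (u : Rˣ) :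
    v.valuation K (algebraMap R K u) = 1 := by
  simp only [HeightOneSpectrum.valuation_eq_one_iff_notMem]
  exact fun h => v.isPrime.ne_top (Ideal.eq_top_of_isUnit_mem _ h u.isUnit)

noncomputable def infLogVec (F : Type*) [Field F] [NumberField F] (x : F) :
    InfinitePlace F → ℝ :=
  fun w => infLogAbs F w x

section LogVectors

variable {F : Type*} [Field F] [NumberField F]

theorem infLogVec_mul {x y : F} (hx : x ≠ 0) (hy : y ≠ 0) :
    infLogVec F (x * y) = infLogVec F x + infLogVec F y := by
  ext w
  simp only [infLogVec, infLogAbs, Pi.add_apply, map_mul,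
    Real.log_mul (pos_iff.2 hx).ne' (pos_iff.2 hy).ne', mul_add]

theorem infLogVec_prod_zpow {ι : Type*} (s : Finset ι) {x : ι → F} (hx : ∀ j ∈ s, x j ≠ 0)
    (m : ι → ℤ) : infLogVec F (∏ j ∈ s, x j ^ m j) = ∑ j ∈ s, (m j : ℝ) • infLogVec F (x j) := by
  ext w
  simp only [infLogVec, infLogAbs, Finset.sum_apply, Pi.smul_apply, smul_eq_mul, map_prod,
    map_zpow₀, Real.log_prod fun j hj => zpow_ne_zero _ (pos_iff.2 (hx j hj)).ne', Real.log_zpow,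
    mul_sum]
  exact sum_congr rfl fun j _ => by ring

theorem sum_infLogVec_eq_log_prod (s : Finset (InfinitePlace F)) {x : F} (hx : x ≠ 0) :
    ∑ w ∈ s, infLogVec F x w = Real.log (∏ w ∈ s, w x ^ w.mult) / finrank ℚ F := by
  rw [Real.log_prod fun w _ => pow_ne_zero _ (pos_iff.2 hx).ne', sum_div]
  exact sum_congr rfl fun w _ => by rw [infLogVec, infLogAbs, Real.log_pow]; ring

theorem finLogAbs_units (v : HeightOneSpectrum (𝓞 F)) (u : (𝓞 F)ˣ) : finLogAbs F v u = 0 := by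
  simp only [finLogAbs, HeightOneSpectrum.valuation_units_eq_one, one_ne_zero, ↓reduceDIte,
    WithZero.unzero_coe]
  exact mul_eq_zero_of_left (div_eq_zero_iff.2 (Or.inl (Int.cast_eq_zero.2 toAdd_one))) _

theorem sum_infLogVec_units (u : (𝓞 F)ˣ) : ∑ w, infLogVec F u w = 0 := by
  simp only [infLogVec, infLogAbs, div_mul_eq_mul_div, ← sum_div, sum_mult_mul_log, zero_div]

theorem sum_abs_infLogVec_units (u : (𝓞 F)ˣ) :
    ∑ w, |infLogVec F u w| = 2 * weilHeight F u := by
  have abs_eq (a : ℝ) : |a| = 2 * max 0 a - a := by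
    rcases le_total 0 a with h | h <;> simp [h, abs_of_nonneg, abs_of_nonpos, two_mul]
  simp only [weilHeight, finLogAbs_units, max_self, finsum_zero, add_zero, abs_eq,
    sum_sub_distrib, ← mul_sum, sum_infLogVec_units, sub_zero]
  rfl

end LogVectors

theorem LinearIndependent.real_of_int_of_discreteTopology {E ι : Type*} [NormedAddCommGroup E]
    [NormedSpace ℝ E] [FiniteDimensional ℝ E] [Fintype ι] {f : ι → E}
    (hf : LinearIndependent ℤ f) (hd : DiscreteTopology (Submodule.span ℤ (Set.range f))) :
    LinearIndependent ℝ f := by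
  rw [linearIndependent_iff_card_eq_finrank_span, Real.finrank_eq_int_finrank_of_discrete hd,
    Set.finrank, finrank_span_eq_card hf]

section UnitLattice

variable {F : Type*} [Field F]

theorem MulIndep.eq_zero_of_prod_zpow_mem_torsion {r : ℕ} {u : Fin r → (𝓞 F)ˣ}
    (hind : MulIndep fun j => (u j : F)) {m : Fin r → ℤ}
    (hm : ∏ j, u j ^ m j ∈ NumberField.Units.torsion F) : m = 0 := by
  obtain ⟨n, hn, hpow⟩ := isOfFinOrder_iff_pow_eq_one.1 ((CommGroup.mem_torsion _).1 hm)
  have hprod : ∏ j, (u j : F) ^ ((n : ℤ) * m j) = 1 := by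
    have h := congr(((Units.map (algebraMap (𝓞 F) F : 𝓞 F →* F) $hpow : Fˣ) : F))
    simpa [Units.coe_prod, Units.val_zpow_eq_zpow_val, mul_comm _ (m _), zpow_mul, prod_pow]
      using h
  ext j
  simpa [hn.ne'] using congr_fun (hind _ hprod) j

variable [NumberField F]

-- Classical decidability of `w ≠ w₀` is what gives `logSpace F` its norm.
open scoped Classical in
theorem linearIndependent_logEmbedding {r : ℕ} {u : Fin r → (𝓞 F)ˣ}
    (hind : MulIndep fun j => (u j : F)) :
    LinearIndependent ℝ fun j => logEmbedding F (Additive.ofMul (u j)) := by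
  refine LinearIndependent.real_of_int_of_discreteTopology ?_ ?_
  · refine Fintype.linearIndependent_iff.2 fun m hm =>
      congr_fun (hind.eq_zero_of_prod_zpow_mem_torsion ?_)
    rw [← logEmbedding_eq_zero_iff, ofMul_prod, map_sum]
    simpa only [ofMul_zpow, map_zsmul] using hm
  · refine DiscreteTopology.of_subset (s := (unitLattice F : Set (logSpace F)))
      (instDiscrete_unitLattice (K := F)) ?_
    exact Submodule.span_le.2 (Set.range_subset_iff.2 fun j => ⟨_, trivial, rfl⟩)

theorem linearIndependent_infLogVec {r : ℕ} {u : Fin r → (𝓞 F)ˣ}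
    (hind : MulIndep fun j => (u j : F)) :
    LinearIndependent ℝ fun j => infLogVec F (u j) := by
  refine LinearIndependent.of_comp ((finrank ℚ F : ℝ) • LinearMap.funLeft ℝ ℝ
    (Subtype.val : {w : InfinitePlace F // w ≠ w₀} → InfinitePlace F)) ?_
  convert linearIndependent_logEmbedding hind with j
  have : (finrank ℚ F : ℝ) ≠ 0 := by exact_mod_cast finrank_pos.ne'
  ext w
  simp [infLogVec, infLogAbs]
  field_simp

end UnitLattice

section Fibers

variable (K L : Type*) [Field K] [Field L] [NumberField L] [Algebra K L]

noncomputable def fiberSum : (InfinitePlace L → ℝ) →ₗ[ℝ] (InfinitePlace K → ℝ) :=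
  LinearMap.pi fun v => ∑ w ∈ placesAbove K L v, LinearMap.proj w

noncomputable def fiberCentering : (InfinitePlace L → ℝ) →ₗ[ℝ] (InfinitePlace L → ℝ) :=
  LinearMap.id - LinearMap.pi fun w =>
    ((placesAbove K L (w.comap (algebraMap K L))).card : ℝ)⁻¹ •
      (LinearMap.proj (w.comap (algebraMap K L))).comp (fiberSum K L)

variable {K L}

theorem fiberSum_apply (f : InfinitePlace L → ℝ) (v : InfinitePlace K) :
    fiberSum K L f v = ∑ w ∈ placesAbove K L v, f w := by
  simp [fiberSum]

theorem fiberCentering_apply (f : InfinitePlace L → ℝ) (w : InfinitePlace L) :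
    fiberCentering K L f w = f w - ((placesAbove K L (w.comap (algebraMap K L))).card : ℝ)⁻¹ *
      ∑ x ∈ placesAbove K L (w.comap (algebraMap K L)), f x := by
  simp [fiberCentering, fiberSum_apply]

theorem fiberCentering_eq_self {f : InfinitePlace L → ℝ} (hf : fiberSum K L f = 0) :
    fiberCentering K L f = f := by
  ext w
  rw [fiberCentering_apply, ← fiberSum_apply, hf, Pi.zero_apply, mul_zero, sub_zero]

variable [NumberField K]

theorem sum_placesAbove_inv_card_mul (v : InfinitePlace K) (a : ℝ) :
    ∑ _w ∈ placesAbove K L v, ((placesAbove K L v).card : ℝ)⁻¹ * a = a := by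
  rw [sum_const, nsmul_eq_mul, mul_inv_cancel_left₀ (by simp [(placesAbove_nonempty v).ne_empty])]

theorem fiberSum_fiberCentering (f : InfinitePlace L → ℝ) :
    fiberSum K L (fiberCentering K L f) = 0 := by
  ext v
  rw [fiberSum_apply, Pi.zero_apply, sum_congr rfl fun w hw => by
    rw [fiberCentering_apply, mem_placesAbove.1 hw], sum_sub_distrib,
    sum_placesAbove_inv_card_mul, sub_self]

theorem fiberSum_surjective : Function.Surjective (fiberSum K L) := fun g => by
  refine ⟨fun w => ((placesAbove K L (w.comap (algebraMap K L))).card : ℝ)⁻¹ *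
    g (w.comap (algebraMap K L)), ?_⟩
  ext v
  rw [fiberSum_apply, sum_congr rfl fun w hw => by rw [mem_placesAbove.1 hw],
    sum_placesAbove_inv_card_mul]

theorem finrank_ker_fiberSum :
    finrank ℝ (LinearMap.ker (fiberSum K L)) = Units.rank L - Units.rank K := by
  have h := LinearMap.finrank_range_add_finrank_ker (fiberSum K L)
  rw [LinearMap.range_eq_top.2 fiberSum_surjective, finrank_top, finrank_fintype_fun_eq_card,
    finrank_fintype_fun_eq_card] at h
  have := Fintype.card_le_of_surjective _ (comap_surjective (K := L) (k := K))
  have := Fintype.card_pos (α := InfinitePlace K)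
  simp only [Units.rank]
  omega

theorem sum_abs_fiberCentering (f : InfinitePlace L → ℝ) :
    ∑ w, |fiberCentering K L f w| = ∑ v, ∑ w ∈ placesAbove K L v,
      |f w - ((placesAbove K L v).card : ℝ)⁻¹ * ∑ x ∈ placesAbove K L v, f x| := by
  rw [← sum_sum_placesAbove (K := K)]
  exact sum_congr rfl fun v _ => sum_congr rfl fun w hw => by
    rw [fiberCentering_apply, mem_placesAbove.1 hw]

theorem fiberSum_infLogVec_eq_zero {x : L} (hx : x ≠ 0) {n : ℕ} (hn : 0 < n)
    (hnorm : Algebra.norm K x ^ n = 1) : fiberSum K L (infLogVec L x) = 0 := by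
  ext v
  have hv : v (Algebra.norm K x) = 1 := by
    rw [← pow_eq_one_iff_of_nonneg (apply_nonneg v _) hn.ne', ← map_pow, hnorm, map_one]
  rw [fiberSum_apply, sum_infLogVec_eq_log_prod _ hx, prod_placesAbove_pow_mult, hv, one_pow,
    Real.log_one, zero_div, Pi.zero_apply]

theorem span_infLogVec_eq_ker_fiberSum {u : Fin (Units.rank L - Units.rank K) → (𝓞 L)ˣ}
    (hind : MulIndep fun j => (u j : L))
    (hnorm : ∀ j, ∃ n : ℕ, 0 < n ∧ Algebra.norm K (u j : L) ^ n = 1) :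
    Submodule.span ℝ (Set.range fun j => infLogVec L (u j)) = LinearMap.ker (fiberSum K L) := by
  refine Submodule.eq_of_le_of_finrank_eq ?_ ?_
  · refine Submodule.span_le.2 (Set.range_subset_iff.2 fun j => ?_)
    obtain ⟨n, hn, hu⟩ := hnorm j
    exact fiberSum_infLogVec_eq_zero (coe_ne_zero _) hn hu
  · rw [finrank_span_eq_card (linearIndependent_infLogVec hind), Fintype.card_fin,
      finrank_ker_fiberSum]

end Fibers

theorem exists_int_sum_abs_add_sum_smul_le {ι κ : Type*} [Fintype ι] [Fintype κ]
    {d : ι → κ → ℝ} {f : κ → ℝ} (hf : f ∈ Submodule.span ℝ (Set.range d)) :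
    ∃ m : ι → ℤ, ∑ k, |(f + ∑ j, (m j : ℝ) • d j) k| ≤ 2⁻¹ * ∑ j, ∑ k, |d j k| := by
  obtain ⟨c, rfl⟩ := (Submodule.mem_span_range_iff_exists_fun ℝ).1 hf
  refine ⟨fun j => -round (c j), ?_⟩
  calc ∑ k, |(∑ j, c j • d j + ∑ j, ((-round (c j) : ℤ) : ℝ) • d j) k|
      = ∑ k, |∑ j, (c j - round (c j)) * d j k| := by
        simp [Finset.sum_apply, sub_eq_add_neg, add_mul, sum_add_distrib]
    _ ≤ ∑ k, ∑ j, 2⁻¹ * |d j k| := by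
        refine sum_le_sum fun k _ => (abs_sum_le_sum_abs _ _).trans (sum_le_sum fun j _ => ?_)
        rw [abs_mul]
        gcongr
        simpa using abs_sub_round (c j)
    _ = 2⁻¹ * ∑ j, ∑ k, |d j k| := by
        rw [sum_comm, mul_sum]
        simp_rw [mul_sum]

theorem exists_relUnit_balancing_archimedean_logs_general
    (K L : Type*) [Field K] [NumberField K] [Field L] [NumberField L] [Algebra K L]
    (M : Set L)
    (ε : Fin (Units.rank L - Units.rank K) → L)
    (hε : ∀ j, ε j ∈ relUnits K L M) (hind : MulIndep ε)
    (μ : L) (hμ : μ ≠ 0) :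
    ∃ γ : L, (∃ m : Fin (Units.rank L - Units.rank K) → ℤ, γ = ∏ j, ε j ^ m j) ∧
      ∑ v : InfinitePlace K, ∑ w ∈ placesAbove K L v,
          |infLogAbs L w (γ * μ) -
            ((placesAbove K L v).card : ℝ)⁻¹ *
              ∑ x ∈ placesAbove K L v, infLogAbs L x (γ * μ)| ≤
        ∑ j, weilHeight L (ε j) := by
  choose u hu using fun j => (hε j).1.2
  obtain rfl : ε = fun j => (u j : L) := funext fun j => (hu j).symm
  have hspan := span_infLogVec_eq_ker_fiberSum hind fun j => (hε j).2
  obtain ⟨m, hm⟩ := exists_int_sum_abs_add_sum_smul_le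
    (f := fiberCentering K L (infLogVec L μ)) (by rw [hspan]; exact fiberSum_fiberCentering _)
  refine ⟨∏ j, (u j : L) ^ m j, ⟨m, rfl⟩, ?_⟩
  have hγμ : fiberCentering K L (infLogVec L ((∏ j, (u j : L) ^ m j) * μ)) =
      fiberCentering K L (infLogVec L μ) + ∑ j, (m j : ℝ) • infLogVec L (u j) := by
    rw [infLogVec_mul (prod_ne_zero_iff.2 fun j _ => zpow_ne_zero _ (coe_ne_zero _)) hμ,
      infLogVec_prod_zpow _ (fun j _ => coe_ne_zero _), map_add, map_sum, add_comm]
    congr 1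
    refine sum_congr rfl fun j _ => ?_
    rw [map_smul, fiberCentering_eq_self (hspan.le (Submodule.subset_span ⟨j, rfl⟩))]
  calc _ = ∑ w, |fiberCentering K L (infLogVec L ((∏ j, (u j : L) ^ m j) * μ)) w| :=
        (sum_abs_fiberCentering _).symm
    _ ≤ 2⁻¹ * ∑ j, ∑ w, |infLogVec L (u j) w| := hγμ ▸ hm
    _ = ∑ j, weilHeight L (u j) := by simp [sum_abs_infLogVec_units, mul_sum]

/-- **Lemma 3.2.** Let `ε₁, …, ε_{r(l/k)}` (with `r(l/k) = r(l) − r(k)`) be multiplicatively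
independent relative units in `E_{l/k}(𝔐)`, generating the subgroup `𝔈`.  If `μ ∈ l^×`,
then there is `γ ∈ 𝔈` such that
`∑_{v∣∞} ∑_{w∣v} |log|γμ|_w − |W_v(l/k)|⁻¹ ∑_{x∣v} log|γμ|_x| ≤ ∑ⱼ h(εⱼ)`. -/
theorem exists_relUnit_balancing_archimedean_logs
    (K L : Type*) [Field K] [NumberField K] [Field L] [NumberField L] [Algebra K L]
    (e : ℕ) (he : e = finrank K L) (b : Basis (Fin e) K L)
    (hbInt : ∀ i, IsIntegral ℤ (b i))
    (M : Set L) (hM : M = fullModule K (fun i => b i))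
    (ε : Fin (Units.rank L - Units.rank K) → L)
    (hε : ∀ j, ε j ∈ relUnits K L M) (hind : MulIndep ε)
    (μ : L) (hμ : μ ≠ 0) :
    ∃ γ : L, (∃ m : Fin (Units.rank L - Units.rank K) → ℤ, γ = ∏ j, ε j ^ m j) ∧
      ∑ v : InfinitePlace K, ∑ w ∈ placesAbove K L v,
          |infLogAbs L w (γ * μ) -
            ((placesAbove K L v).card : ℝ)⁻¹ *
              ∑ x ∈ placesAbove K L v, infLogAbs L x (γ * μ)| ≤
        ∑ j, weilHeight L (ε j) :=
  exists_relUnit_balancing_archimedean_logs_general K L M ε hε hind μ hμ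
end

section
/- Let k ⊆ l be number fields, let 𝔐 ⊆ O_l be a full O_k-module generated by a k-basis of l, and let O_𝔐 = {α ∈ l : α𝔐 ⊆ 𝔐} with unit group O_𝔐^× = O_𝔐 ∩ O_l^×. Let norm_{l/k} : O_𝔐^×/Tor(O_𝔐^×) → O_k^×/Tor(O_k^×) be the homomorphism induced by the relative norm Norm_{l/k}. Then the image of norm_{l/k} has rank r(k), the rank of the unit group O_k^×. -/
open NumberField Module

/-! Since `𝔐` is an `O_k`-module, `O_k^×` lies in `O_𝔐^×`, and on it `Norm_{l/k}` is the
`[l : k]`-th power map; so the images of a fundamental system of units of `k` have norms that are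
independent modulo torsion. Conversely, all norms lie in `O_k^×`, which has rank `r(k)`. -/

namespace NumberField.Units

variable {K : Type*} [Field K]

theorem exists_pow_prod_zpow_eq_one_iff {ι : Type*} [Fintype ι] (u : ι → (𝓞 K)ˣ) (m : ι → ℤ) :
    (∃ n : ℕ, 0 < n ∧ (∏ j, (u j : K) ^ m j) ^ n = 1) ↔ ∏ j, u j ^ m j ∈ torsion K := by
  let coe : (𝓞 K)ˣ →* K := (Units.coeHom K).comp (Units.map (algebraMap (𝓞 K) K))
  have hcoe : (∏ j, (u j : K) ^ m j) = coe (∏ j, u j ^ m j) := by simp [coe, map_prod, map_zpow]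
  rw [hcoe, torsion, CommGroup.mem_torsion, isOfFinOrder_iff_pow_eq_one]
  simp only [← map_pow, map_eq_one_iff coe (coe_injective K)]

variable [NumberField K]

theorem eq_zero_of_prod_fundSystem_zpow_mem_torsion {c : Fin (rank K) → ℤ}
    (h : ∏ i, fundSystem K i ^ c i ∈ torsion K) : c = 0 := by
  obtain ⟨_, _, huniq⟩ := exist_unique_eq_mul_prod K 1
  have hc := huniq (⟨_, inv_mem h⟩, c) (inv_mul_cancel _).symm
  have h0 := huniq (1, 0) (by simp)
  exact congrArg Prod.snd (hc.trans h0.symm)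

theorem exists_ne_zero_prod_zpow_eq_one (u : Fin (rank K + 1) → (𝓞 K)ˣ) :
    ∃ m : Fin (rank K + 1) → ℤ, m ≠ 0 ∧ ∏ j, u j ^ m j = 1 := by
  -- `finrank ℤ` only sees the free part of `(𝓞 K)ˣ`, which has rank `rank K`.
  have hdep : ¬ LinearIndependent ℤ fun j => Additive.ofMul (u j) := fun h => by
    simpa [finrank_eq] using h.fintype_card_le_finrank
  obtain ⟨m, hm, j, hj⟩ := Fintype.not_linearIndependent_iff.mp hdep
  refine ⟨m, fun h => hj (by simp [h]), ?_⟩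
  simpa [← ofMul_zpow, ← ofMul_prod] using hm

end NumberField.Units

open NumberField.Units

section CoeffRing

variable {K L : Type*} [Field K] [NumberField K] [Field L] [Algebra K L] {e : ℕ}

theorem algebraMap_mem_coeffRing_fullModule (ω : Fin e → L) (x : 𝓞 K) :
    algebraMap K L x ∈ coeffRing (fullModule K ω) := by
  rintro y ⟨ν, rfl⟩
  exact ⟨fun i => x * ν i, by simp [Finset.mul_sum, mul_assoc]⟩

theorem algebraMap_mem_coeffRingUnits_fullModule [NumberField L] (ω : Fin e → L) (u : (𝓞 K)ˣ) :
    algebraMap K L (u : K) ∈ coeffRingUnits (fullModule K ω) :=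
  ⟨algebraMap_mem_coeffRing_fullModule (K := K) ω u,
    Units.map (algebraMap (𝓞 K) (𝓞 L)).toMonoidHom u, rfl⟩

end CoeffRing

theorem rank_image_of_induced_norm_general
    (K L : Type*) [Field K] [NumberField K] [Field L] [NumberField L] [Algebra K L]
    (e : ℕ) (b : Basis (Fin e) K L)
    (M : Set L) (hM : M = fullModule K (fun i => b i)) :
    (∃ α : Fin (Units.rank K) → L, (∀ i, α i ∈ coeffRingUnits M) ∧
        ∀ m : Fin (Units.rank K) → ℤ,
          (∃ n : ℕ, 0 < n ∧ (∏ j, Algebra.norm K (α j) ^ m j) ^ n = 1) → m = 0) ∧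
      ∀ α : Fin (Units.rank K + 1) → L, (∀ i, α i ∈ coeffRingUnits M) →
        ∃ m : Fin (Units.rank K + 1) → ℤ, m ≠ 0 ∧
          ∃ n : ℕ, 0 < n ∧ (∏ j, Algebra.norm K (α j) ^ m j) ^ n = 1 := by
  have : FiniteDimensional K L := Module.Finite.of_basis b
  subst hM
  refine ⟨⟨fun i => algebraMap K L (fundSystem K i : K),
    fun i => algebraMap_mem_coeffRingUnits_fullModule _ _, fun m hm => ?_⟩, fun α hα => ?_⟩
  · have hnorm : ∀ j, Algebra.norm K (algebraMap K L (fundSystem K j : K)) =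
        ((fundSystem K j ^ finrank K L : (𝓞 K)ˣ) : K) := fun j => by
      rw [Algebra.norm_algebraMap, coe_pow]
    simp only [hnorm] at hm
    rw [exists_pow_prod_zpow_eq_one_iff] at hm
    simp only [← zpow_natCast, ← zpow_mul] at hm
    funext j
    simpa [finrank_pos.ne'] using congrFun (eq_zero_of_prod_fundSystem_zpow_mem_torsion hm) j
  · choose w hw using fun j => (hα j).2
    let u j : (𝓞 K)ˣ := Units.map (RingOfIntegers.norm K) (w j)
    have hnorm : ∀ j, Algebra.norm K (α j) = (u j : K) := fun j => by
      simp [u, ← hw j]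
    obtain ⟨m, hm, hprod⟩ := exists_ne_zero_prod_zpow_eq_one u
    refine ⟨m, hm, ?_⟩
    simp only [hnorm]
    rw [exists_pow_prod_zpow_eq_one_iff, hprod]
    exact one_mem _

/-- **Step in Lemma 2.1.** The homomorphism `norm_{l/k} : O_𝔐^×/Tor(O_𝔐^×) →
O_k^×/Tor(O_k^×)` induced by the relative norm has image of rank `r(k)`: there are
`r(k)` elements of `O_𝔐^×` whose norms are multiplicatively independent modulo roots of
unity, while the norms of any `r(k) + 1` elements of `O_𝔐^×` are multiplicatively
dependent modulo roots of unity. -/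
theorem rank_image_of_induced_norm
    (K L : Type*) [Field K] [NumberField K] [Field L] [NumberField L] [Algebra K L]
    (e : ℕ) (he : e = finrank K L) (b : Basis (Fin e) K L)
    (hbInt : ∀ i, IsIntegral ℤ (b i))
    (M : Set L) (hM : M = fullModule K (fun i => b i)) :
    (∃ α : Fin (Units.rank K) → L, (∀ i, α i ∈ coeffRingUnits M) ∧
        ∀ m : Fin (Units.rank K) → ℤ,
          (∃ n : ℕ, 0 < n ∧ (∏ j, Algebra.norm K (α j) ^ m j) ^ n = 1) → m = 0) ∧
      ∀ α : Fin (Units.rank K + 1) → L, (∀ i, α i ∈ coeffRingUnits M) →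
        ∃ m : Fin (Units.rank K + 1) → ℤ, m ≠ 0 ∧
          ∃ n : ℕ, 0 < n ∧ (∏ j, Algebra.norm K (α j) ^ m j) ^ n = 1 :=
  rank_image_of_induced_norm_general K L e b M hM
end
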